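/- Let r, d ≥ 1, let a_1, ..., a_r, b ≥ 2 with gcd(a_1⋯a_r, b) = 1 and d ≥ a_1 + ⋯ + a_r + b + 1. For i ∈ {1,...,r} let σ_i be an a_i-cycle and let τ be a b-cycle in the symmetric group S_d, with pairwise disjoint supports. Then there is no indecomposable crossed set structure on X = {1, ..., d} with φ_1 = σ_1 ⋯ σ_r τ. -/

import Mathlib

/-- A rack structure on a set `X`: a binary operation `act` such that each left
translation is bijective and `act` is self-distributive. -/
structure RackStr (X : Type*) where
  act : X → X → X
  bij : ∀ x, Function.Bijective (act x)
  self_distrib : ∀ x y z, act x (act y z) = act (act x y) (act x z)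

namespace RackStr

variable {X : Type*}

/-- A quandle is a rack with `x ▷ x = x`. -/
def IsQuandle (R : RackStr X) : Prop := ∀ x, R.act x x = x

/-- A crossed set is a quandle in which `x ▷ y = y ↔ y ▷ x = x`. -/
def IsCrossed (R : RackStr X) : Prop :=
  R.IsQuandle ∧ ∀ x y, R.act x y = y ↔ R.act y x = x

/-- The left translation `φ_x` as a permutation. -/
noncomputable def perm (R : RackStr X) (x : X) : Equiv.Perm X :=
  Equiv.ofBijective (R.act x) (R.bij x)

/-- A rack is indecomposable if its inner group (generated by the `φ_x`)
acts transitively. -/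
def Indecomposable (R : RackStr X) : Prop :=
  ∀ x y : X, ∃ π ∈ Subgroup.closure (Set.range R.perm), π x = y

end RackStr

/-!
Write `φ_x = S τ` with `S` the product of the `σ_i`, and let `T` be the support of `τ`. As the
orders of `S` and `τ` are coprime, `τ` is a power of `φ_x`, so `S` and `τ` lie in the inner group
`G`; an element of `G` fixing a point `z` commutes with `φ_z`. Every `φ_z` preserves `T`, which
contradicts transitivity since `x ∉ T`. For `z ∉ T` this holds because `τ` commutes with `φ_z`.
For `t ∈ T`, first `φ_t x ∉ T`: for `u` moved by `S`, `φ_u` commutes with `τ`, so it acts on `T`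
as some `τ ^ k`, and `τ ^ (-k) φ_u ∈ G` fixes `T` pointwise; were `φ_t x ∈ T`, it would fix `t`
and `φ_t x`, hence `x`, giving `φ_u x = x` and, the rack being crossed, `S u = u`. So `y = φ_t x`
is fixed by `φ_x`, whence `φ_y = φ_t φ_x φ_t⁻¹` commutes with `φ_x`, and the cycle
`φ_t τ φ_t⁻¹`, a power of `φ_y`, commutes with `τ`. It moves `t ∈ T`, so its support `φ_t T`
equals `T`.
-/

open Equiv Equiv.Perm Finset

theorem Commute.exists_pow_mul_eq_right {G : Type*} [Monoid G] {g h : G} (hgh : Commute g h)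
    (hco : (orderOf g).Coprime (orderOf h)) : ∃ n : ℕ, (g * h) ^ n = h := by
  obtain ⟨n, hng, hnh⟩ := Nat.chineseRemainder hco 0 1
  refine ⟨n, ?_⟩
  have hgn : g ^ n = 1 := orderOf_dvd_iff_pow_eq_one.mp (Nat.modEq_zero_iff_dvd.mp hng)
  rw [hgh.mul_pow, hgn, one_mul, ← pow_mod_orderOf, hnh, pow_mod_orderOf, pow_one]

namespace Equiv.Perm

variable {α : Type*} [Fintype α] [DecidableEq α]

theorem IsCycle.exists_zpow_eq_of_commute {g c : Perm α} (hc : c.IsCycle) (h : Commute g c) :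
    ∃ k : ℤ, ∀ w ∈ c.support, g w = (c ^ k) w := by
  obtain ⟨hg, k, hk⟩ := hc.commute_iff.mp h
  refine ⟨k, fun w hw => ?_⟩
  rw [show c ^ k = _ from hk, ofSubtype_subtypePerm_of_mem hg hw]

theorem IsCycle.support_subset_of_commute {c g : Perm α} (hc : c.IsCycle) (h : Commute c g)
    {a : α} (hac : a ∈ c.support) (hag : a ∈ g.support) : c.support ⊆ g.support := by
  intro y hy
  obtain ⟨j, rfl⟩ := hc.sameCycle (mem_support.mp hac) (mem_support.mp hy)
  exact (mem_support_iff_of_commute (h.zpow_left j) a).mpr hag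

theorem cycleType_prod_ofFn {r : ℕ} {σ : Fin r → Perm α} (hσ : ∀ i, (σ i).IsCycle)
    (hdisj : ∀ i j, i ≠ j → _root_.Disjoint (σ i).support (σ j).support) :
    (List.ofFn σ).prod.cycleType = ↑(List.ofFn fun i => #(σ i).support) := by
  have hpair : (List.ofFn σ).Pairwise Perm.Disjoint :=
    List.pairwise_ofFn.mpr fun i j hij => disjoint_iff_disjoint_support.mpr (hdisj i j hij.ne)
  rw [cycleType_eq _ rfl (by simpa using hσ) hpair]
  simp [Function.comp_def]

end Equiv.Perm

namespace RackStr

variable {X : Type*} (R : RackStr X)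

abbrev innerGroup : Subgroup (Perm X) := Subgroup.closure (Set.range R.perm)

theorem perm_apply (x y : X) : R.perm x y = R.act x y := rfl

theorem perm_mem_innerGroup (x : X) : R.perm x ∈ R.innerGroup :=
  Subgroup.subset_closure ⟨x, rfl⟩

theorem perm_act (x z : X) : R.perm (R.act x z) = R.perm x * R.perm z * (R.perm x)⁻¹ := by
  ext w
  obtain ⟨v, rfl⟩ := (R.perm x).surjective w
  rw [Perm.mul_apply, Perm.mul_apply, Perm.coe_inv, Equiv.symm_apply_apply]
  exact (R.self_distrib x z v).symm

theorem perm_apply_of_mem_innerGroup {π : Perm X} (hπ : π ∈ R.innerGroup) (z : X) :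
    R.perm (π z) = π * R.perm z * π⁻¹ := by
  induction hπ using Subgroup.closure_induction generalizing z with
  | mem _ hg =>
    obtain ⟨x, rfl⟩ := hg
    exact R.perm_act x z
  | one => simp
  | mul g h _ _ hg hh =>
    rw [Perm.mul_apply, hg, hh]
    group
  | inv g _ hg =>
    have e := hg (g⁻¹ z)
    rw [show g (g⁻¹ z) = z from g.apply_symm_apply z] at e
    rw [e]
    group

theorem commute_perm_of_apply_eq_self {π : Perm X} (hπ : π ∈ R.innerGroup) {z : X}
    (hz : π z = z) : Commute π (R.perm z) := by
  have h := R.perm_apply_of_mem_innerGroup hπ z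
  rw [hz] at h
  exact (mul_inv_eq_iff_eq_mul.mp h.symm)

theorem apply_eq_self_of_apply_act_eq_self {π : Perm X} (hπ : π ∈ R.innerGroup) {t x : X}
    (ht : π t = t) (h : π (R.act t x) = R.act t x) : π x = x := by
  have hc := R.commute_perm_of_apply_eq_self hπ ht
  apply (R.perm t).injective
  rw [← Perm.mul_apply, ← hc.eq, Perm.mul_apply]
  exact h

theorem IsCrossed.commute_perm_of_act_eq_self {R : RackStr X} (hR : R.IsCrossed) {x y : X}
    (h : R.act x y = y) : Commute (R.perm y) (R.perm x) := by
  have h' := R.perm_act y x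
  rw [(hR.2 x y).mp h] at h'
  exact mul_inv_eq_iff_eq_mul.mp h'.symm

theorem Indecomposable.mem_of_forall_perm_mem_iff {R : RackStr X} (hR : R.Indecomposable)
    {T : Set X} (hT : ∀ z w, R.perm z w ∈ T ↔ w ∈ T) {x : X} (hx : x ∈ T) (y : X) : y ∈ T := by
  obtain ⟨π, hπ, rfl⟩ := hR x y
  suffices ∀ w, π w ∈ T ↔ w ∈ T from (this x).mpr hx
  induction hπ using Subgroup.closure_induction with
  | mem _ hg =>
    obtain ⟨z, rfl⟩ := hg
    exact hT z
  | one => simp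
  | mul g h _ _ hg hh => exact fun w => (hg (h w)).trans (hh w)
  | inv g _ hg =>
    intro w
    have e := hg (g⁻¹ w)
    rw [show g (g⁻¹ w) = w from g.apply_symm_apply w] at e
    exact e.symm

section

variable {R} {x : X} {S τ : Perm X}

theorem act_eq_of_apply_ne_left (hφ : R.perm x = S * τ) (hSτ : S.Disjoint τ) {z : X}
    (hz : S z ≠ z) : R.act x z = S z := by
  rw [← perm_apply, hφ, Perm.mul_apply, (hSτ z).resolve_left hz]

theorem act_eq_of_apply_ne_right (hφ : R.perm x = S * τ) (hSτ : S.Disjoint τ) {t : X}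
    (ht : τ t ≠ t) : R.act x t = τ t := by
  rw [← perm_apply, hφ, Perm.mul_apply]
  exact (hSτ (τ t)).resolve_right fun h => ht (τ.injective h)

theorem IsQuandle.apply_eq_self_of_perm_eq_mul (hQ : R.IsQuandle) (hφ : R.perm x = S * τ)
    (hSτ : S.Disjoint τ) : S x = x ∧ τ x = x := by
  have hτx : τ x = x := by
    by_contra h
    exact h (act_eq_of_apply_ne_right hφ hSτ h ▸ hQ x)
  refine ⟨?_, hτx⟩
  have h := hQ x
  rwa [← perm_apply, hφ, Perm.mul_apply, hτx] at h

theorem mem_innerGroup_of_perm_pow_eq {B : ℕ} (hB : R.perm x ^ B = τ) : τ ∈ R.innerGroup :=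
  hB ▸ pow_mem (R.perm_mem_innerGroup x) B

theorem left_mem_innerGroup_of_perm_eq_mul (hφ : R.perm x = S * τ) (hτG : τ ∈ R.innerGroup) :
    S ∈ R.innerGroup := by
  have hS : S = R.perm x * τ⁻¹ := by rw [hφ, mul_inv_cancel_right]
  exact hS ▸ mul_mem (R.perm_mem_innerGroup x) (inv_mem hτG)

theorem act_notMem_support [Fintype X] [DecidableEq X] (hR : R.IsCrossed)
    (hφ : R.perm x = S * τ) (hSτ : S.Disjoint τ) (hτG : τ ∈ R.innerGroup) (hτ : τ.IsCycle)
    {u : X} (hu : S u ≠ u) {t : X} (ht : τ t ≠ t) :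
    R.act t x ∉ τ.support := by
  intro hy
  have hτx := (hR.1.apply_eq_self_of_perm_eq_mul hφ hSτ).2
  have hcomm : Commute (R.perm u) τ :=
    (R.commute_perm_of_apply_eq_self hτG ((hSτ u).resolve_left hu)).symm
  obtain ⟨k, hk⟩ := hτ.exists_zpow_eq_of_commute hcomm
  set s := (τ ^ k)⁻¹ * R.perm u
  have hsT : ∀ w ∈ τ.support, s w = w := fun w hw => by
    simp only [s, Perm.mul_apply, hk w hw, Perm.coe_inv, Equiv.symm_apply_apply]
  have hsG : s ∈ R.innerGroup :=
    mul_mem (inv_mem (zpow_mem hτG k)) (R.perm_mem_innerGroup u)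
  have hsx := R.apply_eq_self_of_apply_act_eq_self hsG (hsT t (mem_support.mpr ht)) (hsT _ hy)
  have hux : R.act u x = x := by
    rwa [Perm.mul_apply, Perm.inv_eq_iff_eq, zpow_apply_eq_self_of_apply_eq_self hτx] at hsx
  exact hu (act_eq_of_apply_ne_left hφ hSτ hu ▸ (hR.2 u x).mp hux)

theorem perm_apply_mem_support_iff [Fintype X] [DecidableEq X] (hR : R.IsCrossed)
    (hφ : R.perm x = S * τ) (hSτ : S.Disjoint τ) {B : ℕ} (hB : R.perm x ^ B = τ)
    (hτ : τ.IsCycle) {u : X} (hu : S u ≠ u) {t : X} (ht : τ t ≠ t) (w : X) :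
    R.perm t w ∈ τ.support ↔ w ∈ τ.support := by
  have hτG := mem_innerGroup_of_perm_pow_eq hB
  have hSx := (hR.1.apply_eq_self_of_perm_eq_mul hφ hSτ).1
  have hτy : τ (R.act t x) = R.act t x :=
    notMem_support.mp (act_notMem_support hR hφ hSτ hτG hτ hu ht)
  have hSy : S (R.act t x) = R.act t x := by
    have hc := R.commute_perm_of_apply_eq_self (left_mem_innerGroup_of_perm_eq_mul hφ hτG)
      ((hSτ t).resolve_right ht)
    rw [← perm_apply, ← Perm.mul_apply, hc.eq, Perm.mul_apply, hSx]
  have hxy : R.act x (R.act t x) = R.act t x := by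
    rw [← perm_apply, hφ, Perm.mul_apply, hτy, hSy]
  set c := R.perm t * τ * (R.perm t)⁻¹
  have hcτ : Commute c τ := by
    have hc : c = R.perm (R.act t x) ^ B := by rw [R.perm_act, conj_pow, hB]
    rw [hc, ← hB]
    exact (hR.commute_perm_of_act_eq_self hxy).pow_pow B B
  have hmem : ∀ v, R.perm t v ∈ c.support ↔ v ∈ τ.support := fun v => by simp [c, mem_support]
  have htc : t ∈ c.support := by
    simpa [perm_apply, hR.1 t] using (hmem t).mpr (mem_support.mpr ht)
  have hsupp : c.support = τ.support :=
    eq_of_subset_of_card_le ((hτ.conj).support_subset_of_commute hcτ htc (mem_support.mpr ht))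
      card_support_conj.ge
  simpa only [hsupp] using hmem w

end

theorem not_indecomposable_of_perm_eq_mul_cycle [Fintype X] [DecidableEq X] (hR : R.IsCrossed)
    {x : X} {S τ : Perm X} (hφ : R.perm x = S * τ) (hSτ : S.Disjoint τ) (hS : S ≠ 1)
    (hτ : τ.IsCycle) (hco : (orderOf S).Coprime (orderOf τ)) : ¬ R.Indecomposable := by
  intro hInd
  obtain ⟨B, hB⟩ := hSτ.commute.exists_pow_mul_eq_right hco
  rw [← hφ] at hB
  obtain ⟨u, hu⟩ : ∃ u, S u ≠ u := by simpa [Perm.ext_iff] using hS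
  obtain ⟨t, ht⟩ := hτ.nonempty_support
  have hT : ∀ z w, R.perm z w ∈ (τ.support : Set X) ↔ w ∈ (τ.support : Set X) := by
    intro z
    by_cases hz : τ z = z
    · exact mem_support_iff_of_commute
        (R.commute_perm_of_apply_eq_self (mem_innerGroup_of_perm_pow_eq hB) hz).symm
    · exact perm_apply_mem_support_iff hR hφ hSτ hB hτ hu hz
  have hx := hInd.mem_of_forall_perm_mem_iff hT (mem_coe.mpr ht) x
  exact mem_support.mp hx (hR.1.apply_eq_self_of_perm_eq_mul hφ hSτ).2

end RackStr

theorem incommensurable_profiles_general (r d : ℕ) (hr : 1 ≤ r) (hd : 0 < d)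
    (a : Fin r → ℕ) (b : ℕ)
    (hgcd : Nat.gcd (∏ i, a i) b = 1)
    (σ : Fin r → Equiv.Perm (Fin d)) (τ : Equiv.Perm (Fin d))
    (hσcyc : ∀ i, (σ i).IsCycle) (hσcard : ∀ i, (σ i).support.card = a i)
    (hτcyc : τ.IsCycle) (hτcard : τ.support.card = b)
    (hdisj : ∀ i j, i ≠ j → Disjoint (σ i).support (σ j).support)
    (hdisjτ : ∀ i, Disjoint (σ i).support τ.support) :
    ¬ ∃ R : RackStr (Fin d), R.IsCrossed ∧ R.Indecomposable ∧
        R.perm ⟨0, hd⟩ = (List.ofFn σ).prod * τ := by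
  rintro ⟨R, hR, hInd, hφ⟩
  have hcycleType : (List.ofFn σ).prod.cycleType = ↑(List.ofFn a) := by
    simp only [cycleType_prod_ofFn hσcyc hdisj, hσcard]
  have hSτ : (List.ofFn σ).prod.Disjoint τ := by
    refine (disjoint_prod_right _ fun g hg => ?_).symm
    obtain ⟨i, rfl⟩ := List.mem_ofFn.mp hg
    exact disjoint_iff_disjoint_support.mpr (hdisjτ i).symm
  have hS : (List.ofFn σ).prod ≠ 1 := by
    rw [Ne, ← cycleType_eq_zero, hcycleType]
    simp only [Multiset.coe_eq_zero, List.ofFn_eq_nil_iff]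
    omega
  have hdvd : orderOf (List.ofFn σ).prod ∣ ∏ i, a i := by
    rw [← lcm_cycleType, hcycleType]
    refine Multiset.lcm_dvd.mpr fun n hn => ?_
    obtain ⟨i, rfl⟩ := List.mem_ofFn.mp hn
    exact dvd_prod_of_mem a (mem_univ i)
  have hco := Nat.Coprime.coprime_dvd_left hdvd hgcd
  rw [← hτcard, ← hτcyc.orderOf] at hco
  exact R.not_indecomposable_of_perm_eq_mul_cycle hR hφ hSτ hS hτcyc hco hInd

/-- no indecomposable crossed set structure on `{1,…,d}` has
`φ_1 = σ_1 ⋯ σ_r τ`, where the `σ_i` are `a_i`-cycles and `τ` is a `b`-cycle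
with pairwise disjoint supports, `gcd(a_1⋯a_r, b) = 1`, all `a_i, b ≥ 2`, and
`d ≥ a_1 + ⋯ + a_r + b + 1`. -/
theorem incommensurable_profiles (r d : ℕ) (hr : 1 ≤ r) (hd : 0 < d)
    (a : Fin r → ℕ) (b : ℕ) (ha : ∀ i, 2 ≤ a i) (hb : 2 ≤ b)
    (hgcd : Nat.gcd (∏ i, a i) b = 1)
    (hdge : (∑ i, a i) + b + 1 ≤ d)
    (σ : Fin r → Equiv.Perm (Fin d)) (τ : Equiv.Perm (Fin d))
    (hσcyc : ∀ i, (σ i).IsCycle) (hσcard : ∀ i, (σ i).support.card = a i)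
    (hτcyc : τ.IsCycle) (hτcard : τ.support.card = b)
    (hdisj : ∀ i j, i ≠ j → Disjoint (σ i).support (σ j).support)
    (hdisjτ : ∀ i, Disjoint (σ i).support τ.support) :
    ¬ ∃ R : RackStr (Fin d), R.IsCrossed ∧ R.Indecomposable ∧
        R.perm ⟨0, hd⟩ = (List.ofFn σ).prod * τ :=
  incommensurable_profiles_general r d hr hd a b hgcd σ τ hσcyc hσcard hτcyc hτcard hdisj hdisjτ
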